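/- Under the stated hypotheses, suppose that at every boundary point (x, h(x)) with x ∈ (0,r) one has 2μ(Eu)ν^h(x) + λ(div u)ν^h(x) = g(x). Then at every point (x, mx) with x ∈ (0,r) one has 2μ(Ev)ν⁰ + λ(div v)ν⁰ = g(x) + ĝ^v(x) + ǧ^v(x), where the derivatives of v are evaluated at (x, mx), the functions ω_i are evaluated at x, and ĝ^v = (ĝ₁^v, ĝ₂^v), ǧ^v = (ǧ₁^v, ǧ₂^v) are given by: ĝ₁^v := (2μ + λ)ω₁ ∂ₓv₁ + μω₂ ∂ₓv₂; ĝ₂^v := λω₂ ∂ₓv₁ + μω₁ ∂ₓv₂; ǧ₁^v := (μω₂ + 2μω₃ + λω₃ − μω₆) ∂_y v₁ + (λω₁ + λω₄ − μω₅) ∂_y v₂; ǧ₂^v := (μω₁ + μω₄ − λω₅) ∂_y v₁ + (2μω₂ + λω₂ + μω₃ − 2μω₆ − λω₆) ∂_y v₂. -/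

import Mathlib

/-!
On `Γ_r^m` the point `(x, m x)` is sent by the flattening map `(x, y) ↦ (x, y / σ(x))` to
`(x, h x)`, since `m x / σ(x) = h(x)`. The chain rule there gives `∂ₓu = ∂ₓv + hσ' ∂_y v` and
`∂_y u = σ ∂_y v`. The traction is bilinear in the gradient and the normal, so writing
`ν⁰ = ν^h + (ω₁, ω₂)` and noting
`(ω₃, ω₄, ω₅, ω₆) = (-hσ'ν^h₁, -(σ - 1)ν^h₁, hσ'ν^h₂, (σ - 1)ν^h₂)`, the boundary condition
for `u` turns into the stated one for `v` by pure algebra.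
The only analytic input is `r < β`, so that `h > 0` and `h` is differentiable on `(0, r)`:
by Cauchy–Schwarz, `16 η₀² ≤ (h'(β) - h'(0))² ≤ β ∫ h''² ≤ β M`, while `r M ≤ η₀² / 4`.
-/

open MeasureTheory Set

/-- The flattening factor `σ(x) := h'(0)·x / h(x)` (with `σ(0) := 1`), where `m = h'(0)`. -/
noncomputable def sigmaFun (h : ℝ → ℝ) (m : ℝ) (x : ℝ) : ℝ :=
  if x = 0 then 1 else m * x / h x

/-- Partial derivative in `x`. -/
noncomputable def pdx (f : ℝ × ℝ → ℝ) (q : ℝ × ℝ) : ℝ := fderiv ℝ f q (1, 0)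

/-- Partial derivative in `y`. -/
noncomputable def pdy (f : ℝ × ℝ → ℝ) (q : ℝ × ℝ) : ℝ := fderiv ℝ f q (0, 1)

/-- First component of the traction `2μ(Ew)ν + λ(div w)ν` at the point `q`. -/
noncomputable def traction1 (μ lam : ℝ) (w : ℝ × ℝ → ℝ × ℝ) (q : ℝ × ℝ) (ν : ℝ × ℝ) : ℝ :=
  2 * μ * (pdx (fun p => (w p).1) q * ν.1 +
      (pdx (fun p => (w p).2) q + pdy (fun p => (w p).1) q) / 2 * ν.2) +
    lam * (pdx (fun p => (w p).1) q + pdy (fun p => (w p).2) q) * ν.1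

/-- Second component of the traction `2μ(Ew)ν + λ(div w)ν` at the point `q`. -/
noncomputable def traction2 (μ lam : ℝ) (w : ℝ × ℝ → ℝ × ℝ) (q : ℝ × ℝ) (ν : ℝ × ℝ) : ℝ :=
  2 * μ * ((pdx (fun p => (w p).2) q + pdy (fun p => (w p).1) q) / 2 * ν.1 +
      pdy (fun p => (w p).2) q * ν.2) +
    lam * (pdx (fun p => (w p).1) q + pdy (fun p => (w p).2) q) * ν.2

/-- `ω₁(x) := h'(x)/√(1+h'(x)²) - m/√(1+m²)`. -/
noncomputable def omega1 (h h' : ℝ → ℝ) (m x : ℝ) : ℝ :=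
  h' x / Real.sqrt (1 + (h' x) ^ 2) - m / Real.sqrt (1 + m ^ 2)

/-- `ω₂(x) := 1/√(1+m²) - 1/√(1+h'(x)²)`. -/
noncomputable def omega2 (h h' : ℝ → ℝ) (m x : ℝ) : ℝ :=
  1 / Real.sqrt (1 + m ^ 2) - 1 / Real.sqrt (1 + (h' x) ^ 2)

/-- `ω₃(x) := σ'(x) h(x) h'(x)/√(1+h'(x)²)`. -/
noncomputable def omega3 (h h' : ℝ → ℝ) (m x : ℝ) : ℝ :=
  deriv (sigmaFun h m) x * h x * (h' x / Real.sqrt (1 + (h' x) ^ 2))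

/-- `ω₄(x) := (σ(x)-1) h'(x)/√(1+h'(x)²)`. -/
noncomputable def omega4 (h h' : ℝ → ℝ) (m x : ℝ) : ℝ :=
  (sigmaFun h m x - 1) * (h' x / Real.sqrt (1 + (h' x) ^ 2))

/-- `ω₅(x) := σ'(x) h(x)/√(1+h'(x)²)`. -/
noncomputable def omega5 (h h' : ℝ → ℝ) (m x : ℝ) : ℝ :=
  deriv (sigmaFun h m) x * h x * (1 / Real.sqrt (1 + (h' x) ^ 2))

/-- `ω₆(x) := (σ(x)-1)/√(1+h'(x)²)`. -/
noncomputable def omega6 (h h' : ℝ → ℝ) (m x : ℝ) : ℝ :=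
  (sigmaFun h m x - 1) * (1 / Real.sqrt (1 + (h' x) ^ 2))

open intervalIntegral in
theorem sq_intervalIntegral_le_mul_integral_sq {f : ℝ → ℝ} {a b : ℝ} (hab : a ≤ b)
    (hf : ContinuousOn f (Icc a b)) :
    (∫ x in a..b, f x) ^ 2 ≤ (b - a) * ∫ x in a..b, f x ^ 2 := by
  rcases hab.eq_or_lt with rfl | hlt
  · simp
  set J := ∫ x in a..b, f x
  set t := J / (b - a)
  have hint : IntervalIntegrable f volume a b := hf.intervalIntegrable_of_Icc hab
  have hint2 : IntervalIntegrable (fun x => f x ^ 2) volume a b :=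
    (hf.pow 2).intervalIntegrable_of_Icc hab
  have hexpand :
      ∫ x in a..b, (f x - t) ^ 2 = (∫ x in a..b, f x ^ 2) - 2 * t * J + t ^ 2 * (b - a) := by
    have : ∀ x, (f x - t) ^ 2 = f x ^ 2 - 2 * t * f x + t ^ 2 := fun x => by ring
    simp_rw [this]
    rw [integral_add (hint2.sub (hint.const_mul _)) intervalIntegrable_const,
      integral_sub hint2 (hint.const_mul _), intervalIntegral.integral_const_mul,
      intervalIntegral.integral_const, smul_eq_mul]
    ring
  have hnonneg : 0 ≤ ∫ x in a..b, (f x - t) ^ 2 :=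
    integral_nonneg hab fun x _ => sq_nonneg _
  have hba : 0 < b - a := sub_pos.2 hlt
  rw [hexpand] at hnonneg
  have : t * (b - a) = J := div_mul_cancel₀ J hba.ne'
  nlinarith

theorem sq_sub_le_mul_integral_sq_deriv {f f' : ℝ → ℝ} {a b : ℝ} (hab : a ≤ b)
    (hf : ∀ x ∈ Icc a b, HasDerivWithinAt f (f' x) (Icc a b) x)
    (hf' : ContinuousOn f' (Icc a b)) :
    (f b - f a) ^ 2 ≤ (b - a) * ∫ x in a..b, f' x ^ 2 := by
  have hftc : ∫ x in a..b, f' x = f b - f a :=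
    intervalIntegral.integral_eq_sub_of_hasDeriv_right_of_le hab
      (fun x hx => (hf x hx).continuousWithinAt)
      (fun x hx =>
        ((hf x (Ioo_subset_Icc_self hx)).hasDerivAt (Icc_mem_nhds hx.1 hx.2)).hasDerivWithinAt)
      (hf'.intervalIntegrable_of_Icc hab)
  rw [← hftc]
  exact sq_intervalIntegral_le_mul_integral_sq hab hf'

theorem ContinuousLinearMap.map_pair (L : ℝ × ℝ →L[ℝ] ℝ) (a b : ℝ) :
    L (a, b) = a * L (1, 0) + b * L (0, 1) := by
  conv_lhs => rw [show ((a, b) : ℝ × ℝ) = a • (1, 0) + b • (0, 1) by simp]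
  simp only [map_add, map_smul, smul_eq_mul]

section VerticalRescaling

variable {f : ℝ × ℝ → ℝ} {s : ℝ → ℝ} {s' x y z : ℝ}

theorem hasFDerivAt_vertical_rescaling (hs : HasDerivAt s s' x) (hs0 : s x ≠ 0) :
    HasFDerivAt (fun q : ℝ × ℝ => (q.1, q.2 / s q.1))
      ((ContinuousLinearMap.fst ℝ ℝ ℝ).prod
        ((s x)⁻¹ • ContinuousLinearMap.snd ℝ ℝ ℝ -
          (y * s' / s x ^ 2) • ContinuousLinearMap.fst ℝ ℝ ℝ))
      (x, y) := by
  have hinv : HasFDerivAt (fun q : ℝ × ℝ => (s q.1)⁻¹)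
      ((-s' / s x ^ 2) • ContinuousLinearMap.fst ℝ ℝ ℝ) (x, y) :=
    (hs.inv hs0).comp_hasFDerivAt (f := Prod.fst) (x, y) hasFDerivAt_fst
  refine hasFDerivAt_fst.prodMk ?_
  simp only [div_eq_mul_inv]
  refine (hasFDerivAt_snd.mul hinv).congr_fderiv (ContinuousLinearMap.ext fun q => ?_)
  simp
  ring

theorem hasFDerivAt_comp_vertical_rescaling (hf : DifferentiableAt ℝ f (x, y / s x))
    (hs : HasDerivAt s s' x) (hs0 : s x ≠ 0) :
    HasFDerivAt (fun q => f (q.1, q.2 / s q.1)) ((fderiv ℝ f (x, y / s x)).comp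
      ((ContinuousLinearMap.fst ℝ ℝ ℝ).prod
        ((s x)⁻¹ • ContinuousLinearMap.snd ℝ ℝ ℝ -
          (y * s' / s x ^ 2) • ContinuousLinearMap.fst ℝ ℝ ℝ)))
      (x, y) :=
  hf.hasFDerivAt.comp (x, y) (hasFDerivAt_vertical_rescaling hs hs0)

theorem pdx_eq_of_vertical_rescaling (hf : DifferentiableAt ℝ f (x, z))
    (hs : HasDerivAt s s' x) (hs0 : s x ≠ 0) (hz : y / s x = z) :
    pdx f (x, z) = pdx (fun q => f (q.1, q.2 / s q.1)) (x, y) +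
      z * s' * pdy (fun q => f (q.1, q.2 / s q.1)) (x, y) := by
  subst hz
  rw [pdx, pdx, pdy, (hasFDerivAt_comp_vertical_rescaling hf hs hs0).fderiv]
  simp only [ContinuousLinearMap.comp_apply, ContinuousLinearMap.prod_apply,
    ContinuousLinearMap.coe_fst', ContinuousLinearMap.coe_snd', sub_apply, smul_apply, smul_eq_mul,
    mul_zero, mul_one, zero_sub, sub_zero]
  rw [ContinuousLinearMap.map_pair _ 1 (-_), ContinuousLinearMap.map_pair _ 0 (s x)⁻¹]
  field_simp
  ring

theorem pdy_eq_of_vertical_rescaling (hf : DifferentiableAt ℝ f (x, z))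
    (hs : HasDerivAt s s' x) (hs0 : s x ≠ 0) (hz : y / s x = z) :
    pdy f (x, z) = s x * pdy (fun q => f (q.1, q.2 / s q.1)) (x, y) := by
  subst hz
  rw [pdy, pdy, (hasFDerivAt_comp_vertical_rescaling hf hs hs0).fderiv]
  simp only [ContinuousLinearMap.comp_apply, ContinuousLinearMap.prod_apply,
    ContinuousLinearMap.coe_fst', ContinuousLinearMap.coe_snd', sub_apply, smul_apply, smul_eq_mul,
    mul_zero, mul_one, sub_zero]
  rw [ContinuousLinearMap.map_pair _ 0 (s x)⁻¹, zero_mul, zero_add, mul_inv_cancel_left₀ hs0]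

end VerticalRescaling

section Flattening

variable {h : ℝ → ℝ} {m x : ℝ}

theorem sigmaFun_of_ne_zero (hx : x ≠ 0) : sigmaFun h m x = m * x / h x := if_neg hx

theorem sigmaFun_ne_zero (hm : m ≠ 0) (hx : x ≠ 0) (hhx : h x ≠ 0) : sigmaFun h m x ≠ 0 := by
  rw [sigmaFun_of_ne_zero hx]
  exact div_ne_zero (mul_ne_zero hm hx) hhx

theorem mul_div_sigmaFun (hm : m ≠ 0) (hx : x ≠ 0) (hhx : h x ≠ 0) :
    m * x / sigmaFun h m x = h x := by
  rw [sigmaFun_of_ne_zero hx]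
  field_simp

theorem differentiableAt_sigmaFun (hx : x ≠ 0) (hh : DifferentiableAt ℝ h x) (hhx : h x ≠ 0) :
    DifferentiableAt ℝ (sigmaFun h m) x :=
  ((differentiableAt_id.const_mul m).div hh hhx).congr_of_eventuallyEq <|
    (eventually_ne_nhds hx).mono fun _ hy => sigmaFun_of_ne_zero hy

end Flattening

theorem stmt_8_general (η0 M μ lam : ℝ) (hη0 : 0 < η0) (hM : 1 < M)
    (β : ℝ) (h h' h'' h''' : ℝ → ℝ) (r : ℝ)
    (hβpos : 0 < β)
    (hd1 : ∀ x ∈ Set.Icc (0:ℝ) β, HasDerivWithinAt h (h' x) (Set.Icc 0 β) x)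
    (hd2 : ∀ x ∈ Set.Icc (0:ℝ) β, HasDerivWithinAt h' (h'' x) (Set.Icc 0 β) x)
    (hd3 : ∀ x ∈ Set.Icc (0:ℝ) β, HasDerivWithinAt h'' (h''' x) (Set.Icc 0 β) x)
    (hpos : ∀ x ∈ Set.Ioo (0:ℝ) β, 0 < h x)
    (h'0 : 2 * η0 ≤ h' 0) (h'β : h' β ≤ -(2 * η0))
    (hL2 : (∫ x in (0:ℝ)..β, |h'' x| ^ 2) ≤ M)
    (hr' : r ≤ η0 ^ 2 / (4 * M))
    (U : Set (ℝ × ℝ)) (hU : IsOpen U)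
    (hUsub : {q : ℝ × ℝ | 0 < q.1 ∧ q.1 < r ∧ 0 < q.2 ∧ q.2 < h q.1} ∪
        {q : ℝ × ℝ | ∃ x : ℝ, 0 < x ∧ x < r ∧ q = (x, h x)} ⊆ U)
    (u : ℝ × ℝ → ℝ × ℝ) (hu : ContDiffOn ℝ 1 u U)
    (g : ℝ → ℝ × ℝ)
    (hbc : ∀ x ∈ Set.Ioo (0:ℝ) r,
        traction1 μ lam u (x, h x)
            (-(h' x) / Real.sqrt (1 + (h' x) ^ 2), 1 / Real.sqrt (1 + (h' x) ^ 2)) = (g x).1 ∧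
        traction2 μ lam u (x, h x)
            (-(h' x) / Real.sqrt (1 + (h' x) ^ 2), 1 / Real.sqrt (1 + (h' x) ^ 2)) = (g x).2) :
    ∀ x ∈ Set.Ioo (0:ℝ) r,
      traction1 μ lam (fun q => u (q.1, q.2 / sigmaFun h (h' 0) q.1)) (x, h' 0 * x)
          (-(h' 0) / Real.sqrt (1 + (h' 0) ^ 2), 1 / Real.sqrt (1 + (h' 0) ^ 2)) =
        (g x).1 +
          ((2 * μ + lam) * omega1 h h' (h' 0) x *
              pdx (fun q => (u (q.1, q.2 / sigmaFun h (h' 0) q.1)).1) (x, h' 0 * x) +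
            μ * omega2 h h' (h' 0) x *
              pdx (fun q => (u (q.1, q.2 / sigmaFun h (h' 0) q.1)).2) (x, h' 0 * x)) +
          ((μ * omega2 h h' (h' 0) x + 2 * μ * omega3 h h' (h' 0) x +
              lam * omega3 h h' (h' 0) x - μ * omega6 h h' (h' 0) x) *
              pdy (fun q => (u (q.1, q.2 / sigmaFun h (h' 0) q.1)).1) (x, h' 0 * x) +
            (lam * omega1 h h' (h' 0) x + lam * omega4 h h' (h' 0) x -
              μ * omega5 h h' (h' 0) x) *
              pdy (fun q => (u (q.1, q.2 / sigmaFun h (h' 0) q.1)).2) (x, h' 0 * x)) ∧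
      traction2 μ lam (fun q => u (q.1, q.2 / sigmaFun h (h' 0) q.1)) (x, h' 0 * x)
          (-(h' 0) / Real.sqrt (1 + (h' 0) ^ 2), 1 / Real.sqrt (1 + (h' 0) ^ 2)) =
        (g x).2 +
          (lam * omega2 h h' (h' 0) x *
              pdx (fun q => (u (q.1, q.2 / sigmaFun h (h' 0) q.1)).1) (x, h' 0 * x) +
            μ * omega1 h h' (h' 0) x *
              pdx (fun q => (u (q.1, q.2 / sigmaFun h (h' 0) q.1)).2) (x, h' 0 * x)) +
          ((μ * omega1 h h' (h' 0) x + μ * omega4 h h' (h' 0) x -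
              lam * omega5 h h' (h' 0) x) *
              pdy (fun q => (u (q.1, q.2 / sigmaFun h (h' 0) q.1)).1) (x, h' 0 * x) +
            (2 * μ * omega2 h h' (h' 0) x + lam * omega2 h h' (h' 0) x +
              μ * omega3 h h' (h' 0) x - 2 * μ * omega6 h h' (h' 0) x -
              lam * omega6 h h' (h' 0) x) *
              pdy (fun q => (u (q.1, q.2 / sigmaFun h (h' 0) q.1)).2) (x, h' 0 * x)) := by
  have hrβ : r < β := by
    have hcs := sq_sub_le_mul_integral_sq_deriv hβpos.le hd2
      fun x hx => (hd3 x hx).continuousWithinAt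
    simp only [sq_abs] at hL2
    have hdrop : 16 * η0 ^ 2 ≤ β * M := by nlinarith
    rw [le_div_iff₀ (by positivity)] at hr'
    nlinarith
  rintro x ⟨hx0, hxr⟩
  have hxβ : x < β := hxr.trans hrβ
  have hhx : h x ≠ 0 := (hpos x ⟨hx0, hxβ⟩).ne'
  have hm : h' 0 ≠ 0 := by linarith
  have hσ : HasDerivAt (sigmaFun h (h' 0)) (deriv (sigmaFun h (h' 0)) x) x :=
    (differentiableAt_sigmaFun hx0.ne'
      ((hd1 x ⟨hx0.le, hxβ.le⟩).differentiableWithinAt.differentiableAt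
        (Icc_mem_nhds hx0 hxβ)) hhx).hasDerivAt
  have hσ0 := sigmaFun_ne_zero hm hx0.ne' hhx
  have hflat := mul_div_sigmaFun hm hx0.ne' hhx
  have hu_diff : DifferentiableAt ℝ u (x, h x) :=
    (hu.differentiableOn one_ne_zero).differentiableAt
      (hU.mem_nhds (hUsub (Or.inr ⟨x, hx0, hxr, rfl⟩)))
  obtain ⟨hg1, hg2⟩ := hbc x ⟨hx0, hxr⟩
  simp only [traction1, traction2,
    pdx_eq_of_vertical_rescaling hu_diff.fst hσ hσ0 hflat,
    pdx_eq_of_vertical_rescaling hu_diff.snd hσ hσ0 hflat,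
    pdy_eq_of_vertical_rescaling hu_diff.fst hσ hσ0 hflat,
    pdy_eq_of_vertical_rescaling hu_diff.snd hσ hσ0 hflat] at hg1 hg2
  rw [← hg1, ← hg2]
  constructor <;>
  · simp only [traction1, traction2, omega1, omega2, omega3, omega4, omega5, omega6]
    ring

/-- Transformation of the Neumann boundary condition under the flattening map:
if `2μ(Eu)ν^h + λ(div u)ν^h = g` on `Γ_h^{0,r}`, then
`2μ(Ev)ν⁰ + λ(div v)ν⁰ = g + ĝ^v + ǧ^v` on `Γ_r^m`, where `v(x,y) = u(x, y/σ(x))`. -/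
theorem stmt_8 (L0 η0 M μ lam : ℝ) (hL0 : 1 ≤ L0) (hη0 : 0 < η0) (hη0' : η0 < 1) (hM : 1 < M)
    (β : ℝ) (h h' h'' h''' : ℝ → ℝ) (r : ℝ)
    (hβpos : 0 < β)
    (hd1 : ∀ x ∈ Set.Icc (0:ℝ) β, HasDerivWithinAt h (h' x) (Set.Icc 0 β) x)
    (hd2 : ∀ x ∈ Set.Icc (0:ℝ) β, HasDerivWithinAt h' (h'' x) (Set.Icc 0 β) x)
    (hd3 : ∀ x ∈ Set.Icc (0:ℝ) β, HasDerivWithinAt h'' (h''' x) (Set.Icc 0 β) x)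
    (hc3 : ContinuousOn h''' (Set.Icc 0 β))
    (hpos : ∀ x ∈ Set.Ioo (0:ℝ) β, 0 < h x)
    (h0 : h 0 = 0) (hβ0 : h β = 0)
    (h'0 : 2 * η0 ≤ h' 0) (h'β : h' β ≤ -(2 * η0))
    (hLip : ∀ x1 ∈ Set.Icc (0:ℝ) β, ∀ x2 ∈ Set.Icc (0:ℝ) β, |h x1 - h x2| ≤ L0 * |x1 - x2|)
    (hL2 : (∫ x in (0:ℝ)..β, |h'' x| ^ 2) ≤ M)
    (hr : 0 < r) (hr' : r ≤ η0 ^ 2 / (4 * M))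
    (U : Set (ℝ × ℝ)) (hU : IsOpen U)
    (hUsub : {q : ℝ × ℝ | 0 < q.1 ∧ q.1 < r ∧ 0 < q.2 ∧ q.2 < h q.1} ∪
        {q : ℝ × ℝ | ∃ x : ℝ, 0 < x ∧ x < r ∧ q = (x, h x)} ⊆ U)
    (u : ℝ × ℝ → ℝ × ℝ) (hu : ContDiffOn ℝ 1 u U)
    (g : ℝ → ℝ × ℝ)
    (hbc : ∀ x ∈ Set.Ioo (0:ℝ) r,
        traction1 μ lam u (x, h x)
            (-(h' x) / Real.sqrt (1 + (h' x) ^ 2), 1 / Real.sqrt (1 + (h' x) ^ 2)) = (g x).1 ∧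
        traction2 μ lam u (x, h x)
            (-(h' x) / Real.sqrt (1 + (h' x) ^ 2), 1 / Real.sqrt (1 + (h' x) ^ 2)) = (g x).2) :
    ∀ x ∈ Set.Ioo (0:ℝ) r,
      traction1 μ lam (fun q => u (q.1, q.2 / sigmaFun h (h' 0) q.1)) (x, h' 0 * x)
          (-(h' 0) / Real.sqrt (1 + (h' 0) ^ 2), 1 / Real.sqrt (1 + (h' 0) ^ 2)) =
        (g x).1 +
          ((2 * μ + lam) * omega1 h h' (h' 0) x *
              pdx (fun q => (u (q.1, q.2 / sigmaFun h (h' 0) q.1)).1) (x, h' 0 * x) +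
            μ * omega2 h h' (h' 0) x *
              pdx (fun q => (u (q.1, q.2 / sigmaFun h (h' 0) q.1)).2) (x, h' 0 * x)) +
          ((μ * omega2 h h' (h' 0) x + 2 * μ * omega3 h h' (h' 0) x +
              lam * omega3 h h' (h' 0) x - μ * omega6 h h' (h' 0) x) *
              pdy (fun q => (u (q.1, q.2 / sigmaFun h (h' 0) q.1)).1) (x, h' 0 * x) +
            (lam * omega1 h h' (h' 0) x + lam * omega4 h h' (h' 0) x -
              μ * omega5 h h' (h' 0) x) *
              pdy (fun q => (u (q.1, q.2 / sigmaFun h (h' 0) q.1)).2) (x, h' 0 * x)) ∧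
      traction2 μ lam (fun q => u (q.1, q.2 / sigmaFun h (h' 0) q.1)) (x, h' 0 * x)
          (-(h' 0) / Real.sqrt (1 + (h' 0) ^ 2), 1 / Real.sqrt (1 + (h' 0) ^ 2)) =
        (g x).2 +
          (lam * omega2 h h' (h' 0) x *
              pdx (fun q => (u (q.1, q.2 / sigmaFun h (h' 0) q.1)).1) (x, h' 0 * x) +
            μ * omega1 h h' (h' 0) x *
              pdx (fun q => (u (q.1, q.2 / sigmaFun h (h' 0) q.1)).2) (x, h' 0 * x)) +
          ((μ * omega1 h h' (h' 0) x + μ * omega4 h h' (h' 0) x -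
              lam * omega5 h h' (h' 0) x) *
              pdy (fun q => (u (q.1, q.2 / sigmaFun h (h' 0) q.1)).1) (x, h' 0 * x) +
            (2 * μ * omega2 h h' (h' 0) x + lam * omega2 h h' (h' 0) x +
              μ * omega3 h h' (h' 0) x - 2 * μ * omega6 h h' (h' 0) x -
              lam * omega6 h h' (h' 0) x) *
              pdy (fun q => (u (q.1, q.2 / sigmaFun h (h' 0) q.1)).2) (x, h' 0 * x)) :=
  stmt_8_general η0 M μ lam hη0 hM β h h' h'' h''' r hβpos hd1 hd2 hd3 hpos h'0 h'β hL2 hr' U hU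
    hUsub u hu g hbc
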